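/- arXiv:2512.13589 — 2 statements merged into one kernel-verified Lean document; each statement's English description precedes it below -/
import Mathlib

section
/- Robustness of non-uniform bounded growth under exponentially decaying perturbations (forward direction): suppose the transition matrix of ẋ = A(t)x satisfies ‖Φ_A(t,s)‖ ≤ K₀ e^{a|t−s|} e^{ε|s|} for all t,s, and P : ℝ → M_n(ℝ) is continuous with ‖P(t)‖ ≤ 𝒫 e^{−p|t|} for all t with p > ε. Then the transition matrix Φ̃ of ẋ = (A(t)+P(t))x satisfies ‖Φ̃(t₂,t₁)‖ ≤ K₀ e^{(a+K₀𝒫)(t₂−t₁)+ε|t₁|} for all t₂ ≥ t₁. -/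
/-!
Rescale `u t = ‖Φ̃(t, t₁)‖ e^{-a (t - t₁)}`. Since `p ≥ ε`, the weight `e^{ε|s|}` in the bound on
`Φ_A(t, s)` is absorbed by the decay of `P(s)`, so the variation-of-constants identity gives
`u t ≤ K₀ e^{ε|t₁|} + K₀ 𝒫 ∫_{t₁}^t u`, and Grönwall's inequality yields
`u t ≤ K₀ e^{ε|t₁|} e^{K₀ 𝒫 (t - t₁)}`.
-/

open Matrix
open scoped Matrix.Norms.L2Operator
open Real Set

lemma mul_gronwallBound_zero_left (K ε x : ℝ) :
    K * gronwallBound 0 K ε x = ε * (exp (K * x) - 1) := by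
  rcases eq_or_ne K 0 with rfl | hK
  · simp
  · rw [gronwallBound_of_K_ne_0 hK]
    field_simp
    ring

theorem le_mul_exp_of_le_add_mul_integral {u : ℝ → ℝ} {C L a b : ℝ} (hu : Continuous u)
    (hL : 0 ≤ L) (h : ∀ t ∈ Icc a b, u t ≤ C + L * ∫ s in a..t, u s) :
    ∀ t ∈ Icc a b, u t ≤ C * exp (L * (t - a)) := by
  set v : ℝ → ℝ := fun t => ∫ s in a..t, u s
  have hv : ∀ t, HasDerivAt v (u t) t := fun t =>
    intervalIntegral.integral_hasDerivAt_right (hu.intervalIntegrable _ _)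
      hu.stronglyMeasurable.stronglyMeasurableAtFilter hu.continuousAt
  have hv_le : ∀ t ∈ Icc a b, v t ≤ gronwallBound 0 L C (t - a) :=
    le_gronwallBound_of_liminf_deriv_right_le (fun t _ => (hv t).continuousAt.continuousWithinAt)
      (fun t _ _ hr => (hv t).hasDerivWithinAt.liminf_right_slope_le hr)
      (by simp [v]) (fun t ht => (h t (Ico_subset_Icc_self ht)).trans_eq (add_comm _ _))
  intro t ht
  calc u t ≤ C + L * v t := h t ht
    _ ≤ C + L * gronwallBound 0 L C (t - a) := by gcongr; exact hv_le t ht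
    _ = C * exp (L * (t - a)) := by rw [mul_gronwallBound_zero_left]; ring

section VariationOfConstants

variable {E : Type*} [NormedRing E] [NormedSpace ℝ E] {Φ : ℝ → ℝ → E} {P ψ : ℝ → E}
  {C L a t₀ : ℝ}

lemma norm_le_add_integral_of_variation_of_constants
    (hΦ : ∀ t, Continuous (Φ t)) (hP : Continuous P) (hψ : Continuous ψ)
    (hvoc : ∀ t, t₀ ≤ t → ψ t = Φ t t₀ + ∫ s in t₀..t, Φ t s * P s * ψ s)
    (hΦ₀ : ∀ t, t₀ ≤ t → ‖Φ t t₀‖ ≤ C * exp (a * (t - t₀)))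
    (hΦP : ∀ t, ∀ s ∈ Icc t₀ t, ‖Φ t s‖ * ‖P s‖ ≤ L * exp (a * (t - s)))
    {t : ℝ} (ht : t₀ ≤ t) :
    ‖ψ t‖ ≤ C * exp (a * (t - t₀)) + ∫ s in t₀..t, L * exp (a * (t - s)) * ‖ψ s‖ := by
  rw [hvoc t ht]
  refine (norm_add_le _ _).trans (add_le_add (hΦ₀ t ht) ?_)
  refine (intervalIntegral.norm_integral_le_integral_norm ht).trans ?_
  refine intervalIntegral.integral_mono_on ht
    ((((hΦ t).mul hP).mul hψ).norm.intervalIntegrable _ _)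
    (Continuous.intervalIntegrable (by fun_prop) _ _) fun s hs => ?_
  exact norm_mul₃_le.trans (mul_le_mul_of_nonneg_right (hΦP t s hs) (norm_nonneg _))

lemma norm_mul_exp_le_add_mul_integral_of_variation_of_constants
    (hΦ : ∀ t, Continuous (Φ t)) (hP : Continuous P) (hψ : Continuous ψ)
    (hvoc : ∀ t, t₀ ≤ t → ψ t = Φ t t₀ + ∫ s in t₀..t, Φ t s * P s * ψ s)
    (hΦ₀ : ∀ t, t₀ ≤ t → ‖Φ t t₀‖ ≤ C * exp (a * (t - t₀)))
    (hΦP : ∀ t, ∀ s ∈ Icc t₀ t, ‖Φ t s‖ * ‖P s‖ ≤ L * exp (a * (t - s)))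
    {t : ℝ} (ht : t₀ ≤ t) :
    ‖ψ t‖ * exp (-(a * (t - t₀))) ≤
      C + L * ∫ s in t₀..t, ‖ψ s‖ * exp (-(a * (s - t₀))) := by
  have hscale : ∀ s, exp (-(a * (t - t₀))) * exp (a * (t - s)) = exp (-(a * (s - t₀))) := by
    intro s; rw [← exp_add]; ring_nf
  calc ‖ψ t‖ * exp (-(a * (t - t₀)))
      ≤ (C * exp (a * (t - t₀)) + ∫ s in t₀..t, L * exp (a * (t - s)) * ‖ψ s‖) *
          exp (-(a * (t - t₀))) := by
        gcongr
        exact norm_le_add_integral_of_variation_of_constants hΦ hP hψ hvoc hΦ₀ hΦP ht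
    _ = C + L * ∫ s in t₀..t, ‖ψ s‖ * exp (-(a * (s - t₀))) := by
        rw [add_mul, mul_assoc, ← exp_add, add_neg_cancel, exp_zero, mul_one, mul_comm,
          ← intervalIntegral.integral_const_mul, ← intervalIntegral.integral_const_mul]
        congr 1
        refine intervalIntegral.integral_congr fun s _ => ?_
        simp only [← hscale s]
        ring

theorem norm_le_mul_exp_of_variation_of_constants (hL : 0 ≤ L)
    (hΦ : ∀ t, Continuous (Φ t)) (hP : Continuous P) (hψ : Continuous ψ)
    (hvoc : ∀ t, t₀ ≤ t → ψ t = Φ t t₀ + ∫ s in t₀..t, Φ t s * P s * ψ s)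
    (hΦ₀ : ∀ t, t₀ ≤ t → ‖Φ t t₀‖ ≤ C * exp (a * (t - t₀)))
    (hΦP : ∀ t, ∀ s ∈ Icc t₀ t, ‖Φ t s‖ * ‖P s‖ ≤ L * exp (a * (t - s)))
    {t : ℝ} (ht : t₀ ≤ t) :
    ‖ψ t‖ ≤ C * exp ((a + L) * (t - t₀)) := by
  have hu : Continuous fun s => ‖ψ s‖ * exp (-(a * (s - t₀))) := by fun_prop
  have hgron := le_mul_exp_of_le_add_mul_integral hu hL (b := t) (fun s hs =>
    norm_mul_exp_le_add_mul_integral_of_variation_of_constants hΦ hP hψ hvoc hΦ₀ hΦP hs.1) t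
    ⟨ht, le_rfl⟩
  calc ‖ψ t‖ = ‖ψ t‖ * exp (-(a * (t - t₀))) * exp (a * (t - t₀)) := by
        rw [mul_assoc, ← exp_add, neg_add_cancel, exp_zero, mul_one]
    _ ≤ C * exp (L * (t - t₀)) * exp (a * (t - t₀)) := by gcongr
    _ = C * exp ((a + L) * (t - t₀)) := by rw [mul_assoc, ← exp_add]; ring_nf

end VariationOfConstants

lemma norm_mul_norm_le_of_growth_of_decay {E : Type*} [SeminormedAddCommGroup E] {x y : E}
    {K₀ a ε Pb p t s : ℝ} (hK₀ : 0 ≤ K₀) (hPb : 0 ≤ Pb) (hpε : ε ≤ p) (hst : s ≤ t)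
    (hx : ‖x‖ ≤ K₀ * exp (a * |t - s|) * exp (ε * |s|)) (hy : ‖y‖ ≤ Pb * exp (-p * |s|)) :
    ‖x‖ * ‖y‖ ≤ K₀ * Pb * exp (a * (t - s)) := by
  rw [abs_of_nonneg (sub_nonneg.2 hst)] at hx
  have hdecay : exp ((ε - p) * |s|) ≤ 1 :=
    exp_le_one_iff.2 (mul_nonpos_of_nonpos_of_nonneg (sub_nonpos.2 hpε) (abs_nonneg s))
  calc ‖x‖ * ‖y‖ ≤ K₀ * exp (a * (t - s)) * exp (ε * |s|) * (Pb * exp (-p * |s|)) :=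
        mul_le_mul hx hy (norm_nonneg y) (by positivity)
    _ = K₀ * Pb * exp (a * (t - s)) * exp ((ε - p) * |s|) := by
        rw [show (ε - p) * |s| = ε * |s| + -p * |s| by ring, exp_add]; ring
    _ ≤ K₀ * Pb * exp (a * (t - s)) := mul_le_of_le_one_right (by positivity) hdecay

theorem nonuniform_bounded_growth_perturbation_forward_general
    (n : ℕ) (ΦA Φt : ℝ → ℝ → Matrix (Fin n) (Fin n) ℝ)
    (P : ℝ → Matrix (Fin n) (Fin n) ℝ)
    (K₀ a ε Pb p : ℝ)
    (hK₀ : 0 < K₀) (hPb : 0 < Pb)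
    (hpε : p > ε)
    (hΦAcont : Continuous fun q : ℝ × ℝ => ΦA q.1 q.2)
    (hΦtcont : Continuous fun q : ℝ × ℝ => Φt q.1 q.2)
    (hPcont : Continuous P)
    (hΦA : ∀ t s, ‖ΦA t s‖ ≤ K₀ * Real.exp (a * |t - s|) * Real.exp (ε * |s|))
    (hP : ∀ t, ‖P t‖ ≤ Pb * Real.exp (-p * |t|))
    (hvoc : ∀ t₁ t₂, t₁ ≤ t₂ →
      Φt t₂ t₁ = ΦA t₂ t₁ + ∫ s in t₁..t₂, ΦA t₂ s * P s * Φt s t₁) :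
    ∀ t₁ t₂, t₁ ≤ t₂ →
      ‖Φt t₂ t₁‖ ≤ K₀ * Real.exp ((a + K₀ * Pb) * (t₂ - t₁) + ε * |t₁|) := by
  intro t₁ t₂ ht
  have hΦ₀ : ∀ t, t₁ ≤ t → ‖ΦA t t₁‖ ≤ K₀ * exp (ε * |t₁|) * exp (a * (t - t₁)) := by
    intro t hle
    rw [mul_right_comm, ← abs_of_nonneg (sub_nonneg.2 hle)]
    exact hΦA t t₁
  have hΦP : ∀ t, ∀ s ∈ Icc t₁ t, ‖ΦA t s‖ * ‖P s‖ ≤ K₀ * Pb * exp (a * (t - s)) := fun t s hs =>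
    norm_mul_norm_le_of_growth_of_decay hK₀.le hPb.le hpε.le hs.2 (hΦA t s) (hP s)
  calc ‖Φt t₂ t₁‖ ≤ K₀ * exp (ε * |t₁|) * exp ((a + K₀ * Pb) * (t₂ - t₁)) :=
        norm_le_mul_exp_of_variation_of_constants (by positivity)
          (fun t => hΦAcont.comp (.prodMk_right t)) hPcont
          (hΦtcont.comp (.prodMk_left t₁)) (hvoc t₁) hΦ₀ hΦP ht
    _ = K₀ * exp ((a + K₀ * Pb) * (t₂ - t₁) + ε * |t₁|) := by rw [exp_add]; ring

/-- Robustness of non-uniform bounded growth under exponentially decaying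
perturbations (forward direction): if `‖Φ_A(t,s)‖ ≤ K₀ e^{a|t−s|} e^{ε|s|}` and
`‖P(t)‖ ≤ Pb e^{−p|t|}` with `p > ε`, then the perturbed transition matrix satisfies
`‖Φ̃(t₂,t₁)‖ ≤ K₀ e^{(a+K₀Pb)(t₂−t₁)+ε|t₁|}` for all `t₂ ≥ t₁`. -/
theorem nonuniform_bounded_growth_perturbation_forward
    (n : ℕ) (ΦA Φt : ℝ → ℝ → Matrix (Fin n) (Fin n) ℝ)
    (P : ℝ → Matrix (Fin n) (Fin n) ℝ)
    (K₀ a ε Pb p : ℝ)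
    (hK₀ : 0 < K₀) (ha : 0 < a) (hε : 0 < ε) (hPb : 0 < Pb) (hp : 0 < p)
    (hpε : p > ε)
    (hΦAcont : Continuous fun q : ℝ × ℝ => ΦA q.1 q.2)
    (hΦtcont : Continuous fun q : ℝ × ℝ => Φt q.1 q.2)
    (hPcont : Continuous P)
    (hΦA : ∀ t s, ‖ΦA t s‖ ≤ K₀ * Real.exp (a * |t - s|) * Real.exp (ε * |s|))
    (hP : ∀ t, ‖P t‖ ≤ Pb * Real.exp (-p * |t|))
    (hvoc : ∀ t₁ t₂, t₁ ≤ t₂ →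
      Φt t₂ t₁ = ΦA t₂ t₁ + ∫ s in t₁..t₂, ΦA t₂ s * P s * Φt s t₁) :
    ∀ t₁ t₂, t₁ ≤ t₂ →
      ‖Φt t₂ t₁‖ ≤ K₀ * Real.exp ((a + K₀ * Pb) * (t₂ - t₁) + ε * |t₁|) :=
  nonuniform_bounded_growth_perturbation_forward_general n ΦA Φt P K₀ a ε Pb p hK₀ hPb hpε hΦAcont
    hΦtcont hPcont hΦA hP hvoc
end

section
/- Robustness of non-uniform bounded growth under exponentially decaying perturbations (backward direction): under the same hypotheses as the forward case (‖Φ_A(t,s)‖ ≤ K₀ e^{a|t−s|} e^{ε|s|}, ‖P(t)‖ ≤ 𝒫 e^{−p|t|}, p > ε), the transition matrix Φ̃ of ẋ = (A(t)+P(t))x satisfies ‖Φ̃(t₂,t₁)‖ ≤ K₀ e^{(a+K₀𝒫)(t₁−t₂)+ε|t₁|} for all t₂ ≤ t₁. -/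
open Matrix
open scoped Matrix.Norms.L2Operator

/-!
Bounding the variation-of-constants identity in norm, the decay `‖P s‖ ≤ Pb e^{-p|s|}` absorbs
the non-uniform factor `e^{ε|s|}` of `Φ_A(t,s)` because `ε ≤ p`. What remains, for
`v t = e^{a(t - t₁)} ‖Φ̃(t,t₁)‖`, is the integral inequality
`v t ≤ K₀ e^{ε|t₁|} + ∫_t^{t₁} K₀ Pb v s`, and a backward Grönwall argument gives
`v t ≤ K₀ e^{ε|t₁|} e^{K₀ Pb (t₁ - t)}`.
-/

open Real

theorem le_mul_exp_of_le_add_integral {v : ℝ → ℝ} {B k T : ℝ} (hv : Continuous v) (hk : 0 ≤ k)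
    (h : ∀ t ≤ T, v t ≤ B + ∫ s in t..T, k * v s) {t : ℝ} (ht : t ≤ T) :
    v t ≤ B * exp (k * (T - t)) := by
  set R : ℝ → ℝ := fun x => ∫ s in x..T, k * v s
  have hkv : Continuous fun s => k * v s := continuous_const.mul hv
  have hR : ∀ x, HasDerivAt R (-(k * v x)) x := fun x =>
    intervalIntegral.integral_hasDerivAt_left (hkv.intervalIntegrable _ _)
      (hkv.stronglyMeasurableAtFilter _ _) hkv.continuousAt
  -- `(B + R x) e^{kx}` is nondecreasing on `(-∞, T]`: its derivative is `k e^{kx} (B + R x - v x)`.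
  set F : ℝ → ℝ := fun x => (B + R x) * exp (k * x)
  have hF : ∀ x, HasDerivAt F (-(k * v x) * exp (k * x) + (B + R x) * (exp (k * x) * k)) x :=
    fun x => ((hR x).const_add B).mul (by simpa using ((hasDerivAt_id x).const_mul k).exp)
  have hFmono : MonotoneOn F (Set.Icc t T) := by
    refine monotoneOn_of_deriv_nonneg (convex_Icc t T)
      (fun x _ => (hF x).continuousAt.continuousWithinAt)
      (fun x _ => (hF x).differentiableAt.differentiableWithinAt) fun x hx => ?_
    have hvx : k * v x ≤ k * (B + R x) :=
      mul_le_mul_of_nonneg_left (h x (interior_subset hx).2) hk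
    rw [(hF x).deriv]
    nlinarith [exp_pos (k * x)]
  have hFT : F t ≤ B * exp (k * T) := by
    simpa [F, R] using hFmono ⟨le_rfl, ht⟩ ⟨ht, le_rfl⟩ ht
  have hvF : v t * exp (k * t) ≤ F t := mul_le_mul_of_nonneg_right (h t ht) (exp_pos _).le
  rw [mul_sub, exp_sub, mul_div_assoc', le_div_iff₀ (exp_pos _)]
  exact hvF.trans hFT

section

variable {𝔸 : Type*} [NormedRing 𝔸]

theorem norm_mul_mul_le_of_exp_bounds {ΦA : ℝ → ℝ → 𝔸} {P : ℝ → 𝔸} {K₀ a ε Pb p : ℝ}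
    (hK₀ : 0 ≤ K₀) (hPb : 0 ≤ Pb) (hεp : ε ≤ p)
    (hΦA : ∀ t s, ‖ΦA t s‖ ≤ K₀ * exp (a * |t - s|) * exp (ε * |s|))
    (hP : ∀ t, ‖P t‖ ≤ Pb * exp (-p * |t|)) {t s : ℝ} (hts : t ≤ s) (X : 𝔸) :
    ‖ΦA t s * P s * X‖ ≤ K₀ * Pb * (exp (a * (s - t)) * ‖X‖) := by
  have hΦAts : ‖ΦA t s‖ ≤ K₀ * exp (a * (s - t)) * exp (ε * |s|) := by
    simpa [abs_of_nonpos (sub_nonpos.2 hts)] using hΦA t s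
  have hdecay : exp (ε * |s|) * exp (-p * |s|) ≤ 1 := by
    rw [← exp_add, exp_le_one_iff]
    nlinarith [abs_nonneg s]
  calc ‖ΦA t s * P s * X‖ ≤ ‖ΦA t s‖ * ‖P s‖ * ‖X‖ := norm_mul₃_le
    _ ≤ K₀ * exp (a * (s - t)) * exp (ε * |s|) * (Pb * exp (-p * |s|)) * ‖X‖ := by
      gcongr; exact hP s
    _ = K₀ * Pb * (exp (a * (s - t)) * ‖X‖) * (exp (ε * |s|) * exp (-p * |s|)) := by ring
    _ ≤ K₀ * Pb * (exp (a * (s - t)) * ‖X‖) := by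
      exact mul_le_of_le_one_right (by positivity) hdecay

variable [NormedAlgebra ℝ 𝔸]

theorem exp_mul_norm_le_add_integral {ΦA Φt : ℝ → ℝ → 𝔸} {P : ℝ → 𝔸} {K₀ a ε Pb p : ℝ}
    (hK₀ : 0 ≤ K₀) (hPb : 0 ≤ Pb) (hεp : ε ≤ p) {t₁ : ℝ} (hΦt : Continuous fun s => Φt s t₁)
    (hΦA : ∀ t s, ‖ΦA t s‖ ≤ K₀ * exp (a * |t - s|) * exp (ε * |s|))
    (hP : ∀ t, ‖P t‖ ≤ Pb * exp (-p * |t|))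
    {t : ℝ} (ht : t ≤ t₁) (hvoc : Φt t t₁ = ΦA t t₁ + ∫ s in t..t₁, ΦA t s * P s * Φt s t₁) :
    exp (a * (t - t₁)) * ‖Φt t t₁‖ ≤
      K₀ * exp (ε * |t₁|) + ∫ s in t..t₁, K₀ * Pb * (exp (a * (s - t₁)) * ‖Φt s t₁‖) := by
  have hfree : ‖ΦA t t₁‖ ≤ K₀ * exp (a * (t₁ - t)) * exp (ε * |t₁|) := by
    simpa [abs_of_nonpos (sub_nonpos.2 ht)] using hΦA t t₁
  have hint : ‖∫ s in t..t₁, ΦA t s * P s * Φt s t₁‖ ≤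
      ∫ s in t..t₁, K₀ * Pb * (exp (a * (s - t)) * ‖Φt s t₁‖) :=
    intervalIntegral.norm_integral_le_of_norm_le ht
      (Filter.Eventually.of_forall fun s hs =>
        norm_mul_mul_le_of_exp_bounds hK₀ hPb hεp hΦA hP hs.1.le _)
      ((by fun_prop : Continuous fun s => K₀ * Pb * (exp (a * (s - t)) * ‖Φt s t₁‖)).intervalIntegrable
        _ _)
  have hnorm : ‖Φt t t₁‖ ≤ K₀ * exp (a * (t₁ - t)) * exp (ε * |t₁|) +
      ∫ s in t..t₁, K₀ * Pb * (exp (a * (s - t)) * ‖Φt s t₁‖) := by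
    rw [hvoc]
    exact (norm_add_le _ _).trans (add_le_add hfree hint)
  have hweight : ∀ s, exp (a * (t - t₁)) * exp (a * (s - t)) = exp (a * (s - t₁)) := fun s => by
    rw [← exp_add]; ring_nf
  calc exp (a * (t - t₁)) * ‖Φt t t₁‖
      ≤ exp (a * (t - t₁)) * (K₀ * exp (a * (t₁ - t)) * exp (ε * |t₁|) +
          ∫ s in t..t₁, K₀ * Pb * (exp (a * (s - t)) * ‖Φt s t₁‖)) := by gcongr
    _ = K₀ * exp (ε * |t₁|) + ∫ s in t..t₁, K₀ * Pb * (exp (a * (s - t₁)) * ‖Φt s t₁‖) := by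
      rw [mul_add, ← intervalIntegral.integral_const_mul]
      congr 1
      · have hcancel := hweight t₁
        rw [sub_self, mul_zero, exp_zero] at hcancel
        linear_combination K₀ * exp (ε * |t₁|) * hcancel
      · congr 1; ext s; rw [← hweight s]; ring

end

theorem nonuniform_bounded_growth_perturbation_backward_general
    (n : ℕ) (ΦA Φt : ℝ → ℝ → Matrix (Fin n) (Fin n) ℝ)
    (P : ℝ → Matrix (Fin n) (Fin n) ℝ)
    (K₀ a ε Pb p : ℝ)
    (hK₀ : 0 < K₀) (hPb : 0 < Pb)
    (hpε : p > ε)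
    (hΦtcont : Continuous fun q : ℝ × ℝ => Φt q.1 q.2)
    (hΦA : ∀ t s, ‖ΦA t s‖ ≤ K₀ * Real.exp (a * |t - s|) * Real.exp (ε * |s|))
    (hP : ∀ t, ‖P t‖ ≤ Pb * Real.exp (-p * |t|))
    (hvoc : ∀ t₁ t₂, t₂ ≤ t₁ →
      Φt t₂ t₁ = ΦA t₂ t₁ + ∫ s in t₂..t₁, ΦA t₂ s * P s * Φt s t₁) :
    ∀ t₁ t₂, t₂ ≤ t₁ →
      ‖Φt t₂ t₁‖ ≤ K₀ * Real.exp ((a + K₀ * Pb) * (t₁ - t₂) + ε * |t₁|) := by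
  intro t₁ t₂ ht
  have hΦt : Continuous fun s => Φt s t₁ := hΦtcont.uncurry_right t₁
  have hgron := le_mul_exp_of_le_add_integral (v := fun t => exp (a * (t - t₁)) * ‖Φt t t₁‖)
    (by fun_prop) (by positivity)
    (fun t ht => exp_mul_norm_le_add_integral hK₀.le hPb.le hpε.le hΦt hΦA hP ht (hvoc t₁ t ht))
    ht
  calc ‖Φt t₂ t₁‖ = exp (a * (t₁ - t₂)) * (exp (a * (t₂ - t₁)) * ‖Φt t₂ t₁‖) := by
        rw [← mul_assoc, ← exp_add]; ring_nf; simp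
    _ ≤ exp (a * (t₁ - t₂)) * (K₀ * exp (ε * |t₁|) * exp (K₀ * Pb * (t₁ - t₂))) := by gcongr
    _ = K₀ * exp ((a + K₀ * Pb) * (t₁ - t₂) + ε * |t₁|) := by
      rw [add_mul, add_assoc, exp_add, exp_add]; ring

/-- Robustness of non-uniform bounded growth under exponentially decaying
perturbations (backward direction): if `‖Φ_A(t,s)‖ ≤ K₀ e^{a|t−s|} e^{ε|s|}` and
`‖P(t)‖ ≤ Pb e^{−p|t|}` with `p > ε`, then the perturbed transition matrix satisfies
`‖Φ̃(t₂,t₁)‖ ≤ K₀ e^{(a+K₀Pb)(t₁−t₂)+ε|t₁|}` for all `t₂ ≤ t₁`. -/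
theorem nonuniform_bounded_growth_perturbation_backward
    (n : ℕ) (ΦA Φt : ℝ → ℝ → Matrix (Fin n) (Fin n) ℝ)
    (P : ℝ → Matrix (Fin n) (Fin n) ℝ)
    (K₀ a ε Pb p : ℝ)
    (hK₀ : 0 < K₀) (ha : 0 < a) (hε : 0 < ε) (hPb : 0 < Pb) (hp : 0 < p)
    (hpε : p > ε)
    (hΦAcont : Continuous fun q : ℝ × ℝ => ΦA q.1 q.2)
    (hΦtcont : Continuous fun q : ℝ × ℝ => Φt q.1 q.2)
    (hPcont : Continuous P)
    (hΦA : ∀ t s, ‖ΦA t s‖ ≤ K₀ * Real.exp (a * |t - s|) * Real.exp (ε * |s|))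
    (hP : ∀ t, ‖P t‖ ≤ Pb * Real.exp (-p * |t|))
    (hvoc : ∀ t₁ t₂, t₂ ≤ t₁ →
      Φt t₂ t₁ = ΦA t₂ t₁ + ∫ s in t₂..t₁, ΦA t₂ s * P s * Φt s t₁) :
    ∀ t₁ t₂, t₂ ≤ t₁ →
      ‖Φt t₂ t₁‖ ≤ K₀ * Real.exp ((a + K₀ * Pb) * (t₁ - t₂) + ε * |t₁|) :=
  nonuniform_bounded_growth_perturbation_backward_general n ΦA Φt P K₀ a ε Pb p hK₀ hPb hpε hΦtcont
    hΦA hP hvoc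
end
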